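/- Lower-tail read-k bound for submodular functions under 1-negative association: With the setup above but f_j : {0,1}^{P_j} → [0,1] monotone submodular, and p_0 = (1/n)·Σ_j E[f_j(X*_{P_j})], for every ε > 0 with p_0 − ε ≥ 0: Pr[Σ_{j=1}^n f_j(X_{P_j}) ≤ (p_0−ε)n] ≤ exp(−D(p_0−ε ∥ p_0)·n/k). This follows from the supermodular upper-tail bound applied to g_j = 1 − f_j, using D(1−p ∥ 1−q) = D(p ∥ q). -/

import Mathlib

open MeasureTheory ProbabilityTheory Real Finset

/-- A vector is binary if each coordinate is 0 or 1. -/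
def BinaryVec {m : ℕ} (x : Fin m → ℝ) : Prop := ∀ i, x i = 0 ∨ x i = 1

/-- Monotone non-decreasing on the Boolean cube. -/
def MonoCube {m : ℕ} (f : (Fin m → ℝ) → ℝ) : Prop :=
  ∀ x y : Fin m → ℝ, BinaryVec x → BinaryVec y → x ≤ y → f x ≤ f y

/-- Submodular on the Boolean cube: marginal gains are coordinatewise non-increasing. -/
def SubmodCube {m : ℕ} (f : (Fin m → ℝ) → ℝ) : Prop :=
  ∀ (i : Fin m) (x y : Fin m → ℝ), BinaryVec x → BinaryVec y → x ≤ y →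
    f (Function.update y i 1) - f (Function.update y i 0) ≤
      f (Function.update x i 1) - f (Function.update x i 0)

/-- Supermodular on the Boolean cube: marginal gains are coordinatewise non-decreasing. -/
def SupermodCube {m : ℕ} (f : (Fin m → ℝ) → ℝ) : Prop :=
  ∀ (i : Fin m) (x y : Fin m → ℝ), BinaryVec x → BinaryVec y → x ≤ y →
    f (Function.update x i 1) - f (Function.update x i 0) ≤
      f (Function.update y i 1) - f (Function.update y i 0)

/-- 1-negative association for binary random variables: for every coordinate `i`,
every monotone `F` depending only on coordinates `≠ i` and every monotone `G` of `X i`,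
`E[F·G] ≤ E[F]·E[G]`. -/
def OneNA {Ω : Type*} [MeasurableSpace Ω] (μ : Measure Ω) {m : ℕ} (X : Fin m → Ω → ℝ) : Prop :=
  ∀ (i : Fin m) (F : (Fin m → ℝ) → ℝ) (G : ℝ → ℝ),
    Measurable F → MonoCube F →
    (∀ x y : Fin m → ℝ, (∀ j, j ≠ i → x j = y j) → F x = F y) →
    Measurable G → Monotone G →
    ∫ ω, F (fun j => X j ω) * G (X i ω) ∂μ ≤
      (∫ ω, F (fun j => X j ω) ∂μ) * ∫ ω, G (X i ω) ∂μ

/-- Binary Kullback–Leibler divergence. -/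
noncomputable def klBin (p q : ℝ) : ℝ :=
  p * Real.log (p / q) + (1 - p) * Real.log ((1 - p) / (1 - q))

/-!
Chernoff's method, applied to `exp (-(s / k) ∑ j, f j)`. As the `f j` are monotone and
submodular, this is a supermodular function of the bits, and 1-negative association lets one
resample the bits one at a time by independent Bernoulli bits with the same means without
decreasing the expectation of a supermodular function; so the moment generating function is
at most the one under the independent copy `X*`. For independent bits, Finner's inequality
(the same coordinatewise resampling plus a two-point Hölder inequality) bounds the expectation
of the read-`k` product `∏ j, exp (-s f j) ^ (1 / k)` by `∏ j, E[exp (-s f j)] ^ (1 / k)`.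
Convexity of `exp` and AM-GM bound this by `(1 - (1 - exp (-s)) p₀) ^ (n / k)`, and the
optimal `s` turns the bound into `exp (-D(p₀ - ε ‖ p₀) n / k)`.
-/

open Function

section Cube

variable {m : ℕ}

lemma BinaryVec.update {x : Fin m → ℝ} (hx : BinaryVec x) (i : Fin m) {c : ℝ}
    (hc : c = 0 ∨ c = 1) : BinaryVec (update x i c) := fun j => by
  rcases eq_or_ne j i with rfl | h
  · simpa using hc
  · simpa [h] using hx j

def marginalGain (i : Fin m) (Φ : (Fin m → ℝ) → ℝ) (x : Fin m → ℝ) : ℝ :=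
  Φ (update x i 1) - Φ (update x i 0)

def bernoulliAverage (q : ℝ) (i : Fin m) (Φ : (Fin m → ℝ) → ℝ) (x : Fin m → ℝ) : ℝ :=
  (1 - q) * Φ (update x i 0) + q * Φ (update x i 1)

lemma sub_bernoulliAverage {x : Fin m → ℝ} {i : Fin m} (hx : x i = 0 ∨ x i = 1) (q : ℝ)
    (Φ : (Fin m → ℝ) → ℝ) :
    Φ x - bernoulliAverage q i Φ x = (x i - q) * marginalGain i Φ x := by
  unfold bernoulliAverage marginalGain
  rcases hx with h | h <;> rw [← h, update_eq_self] <;> rw [h] <;> ring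

lemma dependsOn_marginalGain (i : Fin m) (Φ : (Fin m → ℝ) → ℝ) :
    DependsOn (marginalGain i Φ) {i}ᶜ := by
  intro x y h
  have hxy : update x i = update y i := by
    ext c j
    rcases eq_or_ne j i with rfl | hj
    · simp
    · simp [hj, h j hj]
  simp only [marginalGain, hxy]

lemma DependsOn.bernoulliAverage {Φ : (Fin m → ℝ) → ℝ} {s : Finset (Fin m)}
    (hΦ : DependsOn Φ s) (q : ℝ) (i : Fin m) :
    DependsOn (bernoulliAverage q i Φ) ↑(s.erase i) := fun x y h => by
  simp only [_root_.bernoulliAverage, hΦ.update i 0 h, hΦ.update i 1 h]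

lemma DependsOn.apply_update_of_notMem {Φ : (Fin m → ℝ) → ℝ} {s : Finset (Fin m)}
    (hΦ : DependsOn Φ s) {i : Fin m} (hi : i ∉ s) (x : Fin m → ℝ) (c : ℝ) :
    Φ (Function.update x i c) = Φ x :=
  hΦ fun _ hj => update_of_ne (ne_of_mem_of_not_mem hj hi) _ _

lemma bernoulliAverage_eq_self {Φ : (Fin m → ℝ) → ℝ} {s : Finset (Fin m)} {i : Fin m}
    (hΦ : DependsOn Φ s) (hi : i ∉ s) (q : ℝ) : bernoulliAverage q i Φ = Φ := by
  ext x
  simp only [bernoulliAverage, hΦ.apply_update_of_notMem hi]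
  ring

lemma Measurable.marginalGain {Φ : (Fin m → ℝ) → ℝ} (hΦ : Measurable Φ) (i : Fin m) :
    Measurable (marginalGain i Φ) :=
  (hΦ.comp measurable_update_left).sub (hΦ.comp measurable_update_left)

lemma Measurable.bernoulliAverage {Φ : (Fin m → ℝ) → ℝ} (hΦ : Measurable Φ) (q : ℝ)
    (i : Fin m) : Measurable (bernoulliAverage q i Φ) :=
  (measurable_const.mul (hΦ.comp measurable_update_left)).add
    (measurable_const.mul (hΦ.comp measurable_update_left))

lemma SupermodCube.bernoulliAverage {Φ : (Fin m → ℝ) → ℝ} (hΦ : SupermodCube Φ) {q : ℝ}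
    (hq0 : 0 ≤ q) (hq1 : q ≤ 1) (i : Fin m) : SupermodCube (bernoulliAverage q i Φ) := by
  intro i' x y hx hy hxy
  rcases eq_or_ne i' i with rfl | hne
  · simp [_root_.bernoulliAverage]
  have key : ∀ c : ℝ, c = 0 ∨ c = 1 →
      marginalGain i' Φ (update x i c) ≤ marginalGain i' Φ (update y i c) := fun c hc =>
    hΦ i' _ _ (hx.update i hc) (hy.update i hc)
      (update_le_update_iff.2 ⟨le_rfl, fun j _ => hxy j⟩)
  have k0 := key 0 (Or.inl rfl)
  have k1 := key 1 (Or.inr rfl)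
  simp only [marginalGain] at k0 k1
  simp only [_root_.bernoulliAverage, update_comm hne]
  nlinarith

lemma MonoCube.sum {ι : Type*} (s : Finset ι) {f : ι → (Fin m → ℝ) → ℝ}
    (hf : ∀ j ∈ s, MonoCube (f j)) : MonoCube (fun x => ∑ j ∈ s, f j x) :=
  fun x y hx hy hxy => Finset.sum_le_sum fun j hj => hf j hj x y hx hy hxy

lemma SubmodCube.sum {ι : Type*} (s : Finset ι) {f : ι → (Fin m → ℝ) → ℝ}
    (hf : ∀ j ∈ s, SubmodCube (f j)) : SubmodCube (fun x => ∑ j ∈ s, f j x) := by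
  intro i x y hx hy hxy
  simp only [← Finset.sum_sub_distrib]
  exact Finset.sum_le_sum fun j hj => hf j hj i x y hx hy hxy

end Cube

section Integrals

variable {m : ℕ} {Ω : Type*} [MeasurableSpace Ω] {μ : Measure Ω} {X : Fin m → Ω → ℝ}

lemma integrable_comp_of_binary [IsFiniteMeasure μ] (hX : ∀ i, Measurable (X i))
    (hbin : ∀ i ω, X i ω = 0 ∨ X i ω = 1) {Φ : (Fin m → ℝ) → ℝ} (hΦ : Measurable Φ) :
    Integrable (fun ω => Φ (fun i => X i ω)) μ := by
  have hcube : (Set.pi Set.univ fun _ : Fin m => ({0, 1} : Set ℝ)).Finite :=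
    Set.Finite.pi fun _ => by simp
  obtain ⟨M, hM⟩ := (hcube.image fun x => ‖Φ x‖).bddAbove
  refine .of_bound (hΦ.comp (measurable_pi_lambda _ hX)).aestronglyMeasurable M
    (ae_of_all _ fun ω => hM ⟨_, fun i _ => hbin i ω, rfl⟩)

lemma integral_comp_of_dependsOn_empty [IsProbabilityMeasure μ] {Φ : (Fin m → ℝ) → ℝ}
    (hΦ : DependsOn Φ ∅) : ∫ ω, Φ (fun i => X i ω) ∂μ = Φ 0 := by
  simp [hΦ.empty _ 0]

lemma integral_sub_integral_bernoulliAverage [IsFiniteMeasure μ]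
    (hX : ∀ i, Measurable (X i)) (hbin : ∀ i ω, X i ω = 0 ∨ X i ω = 1)
    {Φ : (Fin m → ℝ) → ℝ} (hΦ : Measurable Φ) (i : Fin m) :
    ∫ ω, Φ (fun j => X j ω) ∂μ - ∫ ω, bernoulliAverage (∫ ω, X i ω ∂μ) i Φ (fun j => X j ω) ∂μ
      = ∫ ω, marginalGain i Φ (fun j => X j ω) * X i ω ∂μ -
        (∫ ω, marginalGain i Φ (fun j => X j ω) ∂μ) * ∫ ω, X i ω ∂μ := by
  have hΔ := integrable_comp_of_binary (μ := μ) hX hbin (hΦ.marginalGain i)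
  rw [← integral_mul_const, ← integral_sub (integrable_comp_of_binary hX hbin hΦ)
      (integrable_comp_of_binary hX hbin (hΦ.bernoulliAverage _ i)), ← integral_sub
      (integrable_comp_of_binary (Φ := fun x => marginalGain i Φ x * x i) hX hbin
        ((hΦ.marginalGain i).mul (measurable_pi_apply i)))
      (hΔ.mul_const _)]
  refine integral_congr_ae (ae_of_all _ fun ω => ?_)
  simp only [sub_bernoulliAverage (x := fun j => X j ω) (hbin i ω)]
  ring

lemma OneNA.integral_le_integral_bernoulliAverage [IsFiniteMeasure μ] (hNA : OneNA μ X)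
    (hX : ∀ i, Measurable (X i)) (hbin : ∀ i ω, X i ω = 0 ∨ X i ω = 1)
    {Φ : (Fin m → ℝ) → ℝ} (hΦ : Measurable Φ) (hsup : SupermodCube Φ) (i : Fin m) :
    ∫ ω, Φ (fun j => X j ω) ∂μ ≤
      ∫ ω, bernoulliAverage (∫ ω, X i ω ∂μ) i Φ (fun j => X j ω) ∂μ := by
  have hcov := hNA i (marginalGain i Φ) id (hΦ.marginalGain i) (hsup i)
    (fun x y h => dependsOn_marginalGain i Φ h) measurable_id monotone_id
  have := integral_sub_integral_bernoulliAverage (μ := μ) hX hbin hΦ i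
  simp only [id] at hcov
  linarith

lemma ProbabilityTheory.iIndepFun.indepFun_comp_of_dependsOn {ι β : Type*} [Fintype ι]
    [DecidableEq ι] [MeasurableSpace β] {Y : ι → Ω → β} (hind : iIndepFun Y μ)
    (hY : ∀ i, Measurable (Y i)) (y₀ : ι → β) {g : (ι → β) → ℝ} (hg : Measurable g) {i : ι} (hgi : DependsOn g {i}ᶜ) :
    IndepFun (Y i) (fun ω => g (fun j => Y j ω)) μ := by
  have h := (hind.indepFun_finset {i} {i}ᶜ disjoint_compl_right hY).comp
    (measurable_pi_apply ⟨i, Finset.mem_singleton_self i⟩)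
    (hg.comp (measurable_updateFinset (x := y₀)))
  have hfactor : (fun ω => g (fun j => Y j ω)) =
      (g ∘ updateFinset y₀ {i}ᶜ) ∘ fun ω (j : ({i}ᶜ : Finset ι)) => Y j ω := by
    ext ω
    refine hgi fun j (hj : j ≠ i) => ?_
    simp [updateFinset, hj]
  rw [hfactor]
  exact h

lemma ProbabilityTheory.iIndepFun.integral_eq_integral_bernoulliAverage [IsFiniteMeasure μ]
    (hind : iIndepFun X μ) (hX : ∀ i, Measurable (X i))
    (hbin : ∀ i ω, X i ω = 0 ∨ X i ω = 1) {Φ : (Fin m → ℝ) → ℝ} (hΦ : Measurable Φ)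
    (i : Fin m) :
    ∫ ω, Φ (fun j => X j ω) ∂μ =
      ∫ ω, bernoulliAverage (∫ ω, X i ω ∂μ) i Φ (fun j => X j ω) ∂μ := by
  have hcov := (hind.indepFun_comp_of_dependsOn hX 0 (hΦ.marginalGain i)
    (dependsOn_marginalGain i Φ)).symm.integral_mul_eq_mul_integral
    (hΦ.marginalGain i |>.comp (measurable_pi_lambda _ hX)).aestronglyMeasurable
    (hX i).aestronglyMeasurable
  have := integral_sub_integral_bernoulliAverage (μ := μ) hX hbin hΦ i
  simp only [Pi.mul_apply] at hcov
  linarith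

end Integrals

section Comparison

variable {m : ℕ} {Ω : Type*} [MeasurableSpace Ω] {μ : Measure Ω} [IsProbabilityMeasure μ]
  {X : Fin m → Ω → ℝ}

lemma integral_mem_Icc_zero_one {Y : Ω → ℝ} (hY : ∀ ω, Y ω ∈ Set.Icc (0 : ℝ) 1) :
    ∫ ω, Y ω ∂μ ∈ Set.Icc (0 : ℝ) 1 :=
  ⟨integral_nonneg fun ω => (hY ω).1, by
    simpa using integral_mono_of_nonneg (μ := μ) (ae_of_all _ fun ω => (hY ω).1)
      (integrable_const 1) (ae_of_all _ fun ω => (hY ω).2)⟩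

lemma mem_Icc_of_binary {x : ℝ} (hx : x = 0 ∨ x = 1) : x ∈ Set.Icc (0 : ℝ) 1 := by
  rcases hx with rfl | rfl <;> simp

theorem OneNA.integral_le_integral_of_supermodCube (hNA : OneNA μ X)
    (hX : ∀ i, Measurable (X i)) (hbin : ∀ i ω, X i ω = 0 ∨ X i ω = 1)
    {Y : Fin m → Ω → ℝ} (hind : iIndepFun Y μ) (hY : ∀ i, Measurable (Y i))
    (hbinY : ∀ i ω, Y i ω = 0 ∨ Y i ω = 1) (hmarg : ∀ i, μ.map (Y i) = μ.map (X i))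
    {Φ : (Fin m → ℝ) → ℝ} (hΦ : Measurable Φ) (hsup : SupermodCube Φ) :
    ∫ ω, Φ (fun i => X i ω) ∂μ ≤ ∫ ω, Φ (fun i => Y i ω) ∂μ := by
  have hmean : ∀ i, ∫ ω, Y i ω ∂μ = ∫ ω, X i ω ∂μ := fun i =>
    IdentDistrib.integral_eq ⟨(hY i).aemeasurable, (hX i).aemeasurable, hmarg i⟩
  suffices ∀ s : Finset (Fin m), ∀ Φ : (Fin m → ℝ) → ℝ, Measurable Φ → SupermodCube Φ →
      DependsOn Φ s → ∫ ω, Φ (fun i => X i ω) ∂μ ≤ ∫ ω, Φ (fun i => Y i ω) ∂μ from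
    this Finset.univ Φ hΦ hsup (by simpa using dependsOn_univ Φ)
  intro s
  induction s using Finset.induction_on with
  | empty =>
    intro Φ _ _ hdep
    rw [Finset.coe_empty] at hdep
    rw [integral_comp_of_dependsOn_empty hdep, integral_comp_of_dependsOn_empty hdep]
  | insert i s hi ih =>
    intro Φ hΦ hsup hdep
    have hq := integral_mem_Icc_zero_one (μ := μ) fun ω => mem_Icc_of_binary (hbin i ω)
    calc ∫ ω, Φ (fun i => X i ω) ∂μ
        ≤ ∫ ω, bernoulliAverage (∫ ω, X i ω ∂μ) i Φ (fun j => X j ω) ∂μ :=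
          hNA.integral_le_integral_bernoulliAverage hX hbin hΦ hsup i
      _ ≤ ∫ ω, bernoulliAverage (∫ ω, X i ω ∂μ) i Φ (fun j => Y j ω) ∂μ :=
          ih _ (hΦ.bernoulliAverage _ i) (hsup.bernoulliAverage hq.1 hq.2 i)
            (by simpa [Finset.erase_insert hi] using hdep.bernoulliAverage (∫ ω, X i ω ∂μ) i)
      _ = ∫ ω, Φ (fun i => Y i ω) ∂μ := by
          rw [← hmean i]
          exact (hind.integral_eq_integral_bernoulliAverage hY hbinY hΦ i).symm

end Comparison

section Holder

lemma prod_rpow_inv_le_of_card_le {ι : Type*} {k : ℕ} (S : Finset ι) (hS : S.card ≤ k)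
    {t : ι → ℝ} (ht : ∀ j ∈ S, 0 ≤ t j) :
    ∏ j ∈ S, t j ^ (k : ℝ)⁻¹ ≤ (k : ℝ)⁻¹ * ∑ j ∈ S, t j + (1 - S.card / k) := by
  have hslack : 0 ≤ 1 - (S.card : ℝ) / k := by
    rcases k.eq_zero_or_pos with rfl | hk
    · simp
    · rw [sub_nonneg, div_le_one (by exact_mod_cast hk)]
      exact_mod_cast hS
  -- weighted AM-GM with the weight `1 - |S|/k` put on an extra point with value `1`
  have h := Real.geom_mean_le_arith_mean_weighted (Finset.insertNone S)
    (fun o => o.elim (1 - S.card / k) fun _ => (k : ℝ)⁻¹) (fun o => o.elim 1 t)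
    (Finset.forall_mem_insertNone.2 ⟨hslack, fun _ _ => inv_nonneg.2 k.cast_nonneg⟩)
    (by simp [Finset.sum_insertNone]; ring)
    (Finset.forall_mem_insertNone.2 ⟨zero_le_one, ht⟩)
  simpa [Finset.prod_insertNone, Finset.sum_insertNone, ← Finset.mul_sum, add_comm] using h

lemma mul_prod_rpow_add_mul_prod_rpow_le {ι : Type*} {k : ℕ} {q : ℝ} (hq0 : 0 ≤ q)
    (hq1 : q ≤ 1) (S : Finset ι) (hS : S.card ≤ k) {A B : ι → ℝ} (hA : ∀ j ∈ S, 0 ≤ A j)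
    (hB : ∀ j ∈ S, 0 ≤ B j) :
    (1 - q) * ∏ j ∈ S, A j ^ (k : ℝ)⁻¹ + q * ∏ j ∈ S, B j ^ (k : ℝ)⁻¹ ≤
      ∏ j ∈ S, ((1 - q) * A j + q * B j) ^ (k : ℝ)⁻¹ := by
  set C : ι → ℝ := fun j => (1 - q) * A j + q * B j with hCdef
  have hC : ∀ j ∈ S, 0 ≤ C j := fun j hj =>
    add_nonneg (mul_nonneg (by linarith) (hA j hj)) (mul_nonneg hq0 (hB j hj))
  by_cases hCpos : ∀ j ∈ S, 0 < C j
  · have hP : 0 < ∏ j ∈ S, C j ^ (k : ℝ)⁻¹ :=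
      Finset.prod_pos fun j hj => Real.rpow_pos_of_pos (hCpos j hj) _
    have key : ∀ D : ι → ℝ, (∀ j ∈ S, 0 ≤ D j) → ∏ j ∈ S, D j ^ (k : ℝ)⁻¹ ≤
        ((k : ℝ)⁻¹ * ∑ j ∈ S, D j / C j + (1 - S.card / k)) * ∏ j ∈ S, C j ^ (k : ℝ)⁻¹ := by
      intro D hD
      have h := prod_rpow_inv_le_of_card_le S hS fun j hj => div_nonneg (hD j hj) (hC j hj)
      rwa [Finset.prod_congr rfl fun j hj => Real.div_rpow (hD j hj) (hC j hj) _,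
        Finset.prod_div_distrib, div_le_iff₀ hP] at h
    have hsum : (1 - q) * ∑ j ∈ S, A j / C j + q * ∑ j ∈ S, B j / C j = S.card := by
      rw [Finset.mul_sum, Finset.mul_sum, ← Finset.sum_add_distrib, Finset.card_eq_sum_ones,
        Nat.cast_sum, Nat.cast_one]
      refine Finset.sum_congr rfl fun j hj => ?_
      field_simp [(hCpos j hj).ne']
      simp [hCdef]
    calc (1 - q) * ∏ j ∈ S, A j ^ (k : ℝ)⁻¹ + q * ∏ j ∈ S, B j ^ (k : ℝ)⁻¹
        ≤ (1 - q) * (((k : ℝ)⁻¹ * ∑ j ∈ S, A j / C j + (1 - S.card / k)) *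
            ∏ j ∈ S, C j ^ (k : ℝ)⁻¹) +
          q * (((k : ℝ)⁻¹ * ∑ j ∈ S, B j / C j + (1 - S.card / k)) *
            ∏ j ∈ S, C j ^ (k : ℝ)⁻¹) :=
          add_le_add (mul_le_mul_of_nonneg_left (key A hA) (by linarith))
            (mul_le_mul_of_nonneg_left (key B hB) hq0)
      _ = ∏ j ∈ S, C j ^ (k : ℝ)⁻¹ := by
          linear_combination (∏ j ∈ S, C j ^ (k : ℝ)⁻¹) * (k : ℝ)⁻¹ * hsum
  · obtain ⟨j₀, hj₀, hCj₀⟩ := not_forall₂.1 hCpos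
    have hk : (k : ℝ)⁻¹ ≠ 0 :=
      inv_ne_zero (Nat.cast_ne_zero.2 ((Finset.card_pos.2 ⟨j₀, hj₀⟩).trans_le hS).ne')
    have hvanish : ∀ {c : ℝ} {D : ι → ℝ}, c * D j₀ = 0 → c * ∏ j ∈ S, D j ^ (k : ℝ)⁻¹ = 0 :=
      fun h => by
        rcases mul_eq_zero.1 h with h | h
        · rw [h, zero_mul]
        · rw [Finset.prod_eq_zero hj₀ (by rw [h, Real.zero_rpow hk]), mul_zero]
    have hA₀ := mul_nonneg (sub_nonneg.2 hq1) (hA j₀ hj₀)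
    have hB₀ := mul_nonneg hq0 (hB j₀ hj₀)
    rw [hvanish (by linarith), hvanish (by linarith), add_zero]
    exact Finset.prod_nonneg fun j hj => Real.rpow_nonneg (hC j hj) _

variable {m n k : ℕ}

lemma bernoulliAverage_prod_rpow_le {q : ℝ} (hq0 : 0 ≤ q) (hq1 : q ≤ 1) (i : Fin m)
    {Q : Fin n → Finset (Fin m)} (hread : (Finset.univ.filter fun j => i ∈ Q j).card ≤ k)
    {u : Fin n → (Fin m → ℝ) → ℝ} (hu : ∀ j x, 0 ≤ u j x) (hdep : ∀ j, DependsOn (u j) (Q j))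
    (x : Fin m → ℝ) :
    bernoulliAverage q i (fun y => ∏ j, u j y ^ (k : ℝ)⁻¹) x ≤
      ∏ j, bernoulliAverage q i (u j) x ^ (k : ℝ)⁻¹ := by
  set S := Finset.univ.filter fun j => i ∈ Q j
  set R := ∏ j ∈ Finset.univ.filter fun j => i ∉ Q j, u j x ^ (k : ℝ)⁻¹
  -- the factors `u j` with `i ∉ Q j` do not see coordinate `i`
  have hsplit : ∀ v : Fin n → ℝ, (∀ j, i ∉ Q j → v j = u j x) →
      ∏ j, v j ^ (k : ℝ)⁻¹ = (∏ j ∈ S, v j ^ (k : ℝ)⁻¹) * R := fun v hv => by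
    rw [← Finset.prod_filter_mul_prod_filter_not Finset.univ fun j => i ∈ Q j]
    exact congrArg _ (Finset.prod_congr rfl fun j hj => by rw [hv j (Finset.mem_filter.1 hj).2])
  have hR : 0 ≤ R := Finset.prod_nonneg fun j _ => Real.rpow_nonneg (hu j x) _
  rw [bernoulliAverage, hsplit _ fun j hj => (hdep j).apply_update_of_notMem hj x 0,
    hsplit _ fun j hj => (hdep j).apply_update_of_notMem hj x 1,
    hsplit _ fun j hj => congrFun (bernoulliAverage_eq_self (hdep j) hj q) x, ← mul_assoc,
    ← mul_assoc, ← add_mul]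
  exact mul_le_mul_of_nonneg_right (mul_prod_rpow_add_mul_prod_rpow_le hq0 hq1 S hread
    (fun j _ => hu j _) fun j _ => hu j _) hR

end Holder

section Finner

variable {m n k : ℕ} {Ω : Type*} [MeasurableSpace Ω] {μ : Measure Ω} [IsProbabilityMeasure μ]
  {Y : Fin m → Ω → ℝ}

theorem ProbabilityTheory.iIndepFun.integral_prod_rpow_le (hind : iIndepFun Y μ)
    (hY : ∀ i, Measurable (Y i)) (hbin : ∀ i ω, Y i ω = 0 ∨ Y i ω = 1)
    (Q : Fin n → Finset (Fin m)) (hread : ∀ i, (Finset.univ.filter fun j => i ∈ Q j).card ≤ k)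
    {u : Fin n → (Fin m → ℝ) → ℝ} (hmeas : ∀ j, Measurable (u j)) (hu : ∀ j x, 0 ≤ u j x)
    (hdep : ∀ j, DependsOn (u j) (Q j)) :
    ∫ ω, ∏ j, u j (fun i => Y i ω) ^ (k : ℝ)⁻¹ ∂μ ≤
      ∏ j, (∫ ω, u j (fun i => Y i ω) ∂μ) ^ (k : ℝ)⁻¹ := by
  suffices ∀ s : Finset (Fin m), ∀ (Q : Fin n → Finset (Fin m)) (u : Fin n → (Fin m → ℝ) → ℝ),
      (∀ j, Q j ⊆ s) → (∀ i, (Finset.univ.filter fun j => i ∈ Q j).card ≤ k) →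
      (∀ j, Measurable (u j)) → (∀ j x, 0 ≤ u j x) → (∀ j, DependsOn (u j) (Q j)) →
      ∫ ω, ∏ j, u j (fun i => Y i ω) ^ (k : ℝ)⁻¹ ∂μ ≤
        ∏ j, (∫ ω, u j (fun i => Y i ω) ∂μ) ^ (k : ℝ)⁻¹ from
    this Finset.univ Q u (fun j => Finset.subset_univ _) hread hmeas hu hdep
  intro s
  induction s using Finset.induction_on with
  | empty =>
    intro Q u hQ _ _ _ hdep
    have hconst : ∀ j, DependsOn (u j) ∅ := fun j => by
      simpa [Finset.subset_empty.1 (hQ j)] using hdep j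
    rw [integral_comp_of_dependsOn_empty (Φ := fun x => ∏ j, u j x ^ (k : ℝ)⁻¹)
      fun x y _ => Finset.prod_congr rfl fun j _ => by rw [(hconst j).empty x y]]
    simp_rw [integral_comp_of_dependsOn_empty (hconst _), le_refl]
  | insert i s hi ih =>
    intro Q u hQ hread hmeas hu hdep
    have hq := integral_mem_Icc_zero_one (μ := μ) fun ω => mem_Icc_of_binary (hbin i ω)
    set q := ∫ ω, Y i ω ∂μ
    have hmeas' : ∀ j, Measurable (bernoulliAverage q i (u j)) := fun j =>
      (hmeas j).bernoulliAverage q i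
    calc ∫ ω, ∏ j, u j (fun i => Y i ω) ^ (k : ℝ)⁻¹ ∂μ
        = ∫ ω, bernoulliAverage q i (fun x => ∏ j, u j x ^ (k : ℝ)⁻¹) (fun i => Y i ω) ∂μ :=
          hind.integral_eq_integral_bernoulliAverage hY hbin
            (Finset.measurable_prod _ fun j _ => (hmeas j).pow_const _) i
      _ ≤ ∫ ω, ∏ j, bernoulliAverage q i (u j) (fun i => Y i ω) ^ (k : ℝ)⁻¹ ∂μ :=
          integral_mono
            (integrable_comp_of_binary hY hbin ((Finset.measurable_prod _ fun j _ =>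
              (hmeas j).pow_const _).bernoulliAverage q i))
            (integrable_comp_of_binary (Φ := fun x => ∏ j, bernoulliAverage q i (u j) x ^ _)
              hY hbin (Finset.measurable_prod _ fun j _ => (hmeas' j).pow_const _))
            fun ω => bernoulliAverage_prod_rpow_le hq.1 hq.2 i (hread i) hu hdep _
      _ ≤ ∏ j, (∫ ω, bernoulliAverage q i (u j) (fun i => Y i ω) ∂μ) ^ (k : ℝ)⁻¹ := by
          refine ih (fun j => (Q j).erase i) _ ?_ ?_ hmeas' ?_ fun j => ?_
          · intro j l hl
            obtain ⟨hli, hlQ⟩ := Finset.mem_erase.1 hl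
            exact (Finset.mem_insert.1 (hQ j hlQ)).resolve_left hli
          · exact fun l => (Finset.card_le_card fun j => by simp +contextual).trans (hread l)
          · exact fun j x => add_nonneg (mul_nonneg (by linarith [hq.2]) (hu j _))
              (mul_nonneg hq.1 (hu j _))
          · exact (hdep j).bernoulliAverage q i
      _ = ∏ j, (∫ ω, u j (fun i => Y i ω) ∂μ) ^ (k : ℝ)⁻¹ :=
          Finset.prod_congr rfl fun j _ => by
            rw [← hind.integral_eq_integral_bernoulliAverage hY hbin (hmeas j) i]

end Finner

section MomentGenerating

variable {m n k : ℕ} {Ω : Type*} [MeasurableSpace Ω] {μ : Measure Ω} [IsProbabilityMeasure μ]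
  {X : Fin m → Ω → ℝ}

lemma supermodCube_exp_neg_mul {F : (Fin m → ℝ) → ℝ} (hmono : MonoCube F)
    (hsub : SubmodCube F) {t : ℝ} (ht : 0 ≤ t) : SupermodCube fun x => exp (-t * F x) := by
  intro i x y hx hy hxy
  have hx0 := hx.update i (Or.inl rfl)
  have hy0 := hy.update i (Or.inl rfl)
  have hy1 := hy.update i (Or.inr rfl)
  have hlow : F (update x i 0) ≤ F (update y i 0) :=
    hmono _ _ hx0 hy0 (update_le_update_iff.2 ⟨le_rfl, fun j _ => hxy j⟩)
  have hgain : 0 ≤ F (update y i 1) - F (update y i 0) :=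
    sub_nonneg.2 (hmono _ _ hy0 hy1 (update_le_update_iff'.2 zero_le_one))
  have hsub' := hsub i x y hx hy hxy
  set d := F (update y i 1) - F (update y i 0)
  -- a marginal gain of `exp (-t F)` is `exp (-t F (update · i 0)) * (exp (-t * gain) - 1)`:
  -- a nonnegative factor that decreases and a nonpositive one that increases from `x` to `y`
  have hx1le : exp (-t * F (update x i 1)) ≤ exp (-t * F (update x i 0)) * exp (-t * d) := by
    rw [← exp_add]
    exact exp_le_exp.2 (by nlinarith)
  have hy1eq : exp (-t * F (update y i 1)) = exp (-t * F (update y i 0)) * exp (-t * d) := by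
    rw [← exp_add, mul_sub]
    ring_nf
  have h0 : exp (-t * F (update y i 0)) ≤ exp (-t * F (update x i 0)) :=
    exp_le_exp.2 (by nlinarith)
  have hd : exp (-t * d) ≤ 1 := exp_le_one_iff.2 (by nlinarith)
  simp only
  nlinarith [mul_le_mul_of_nonneg_right h0 (sub_nonneg.2 hd)]

theorem OneNA.integral_exp_neg_mul_sum_le (hNA : OneNA μ X) (hX : ∀ i, Measurable (X i))
    (hbin : ∀ i ω, X i ω = 0 ∨ X i ω = 1) {Y : Fin m → Ω → ℝ} (hind : iIndepFun Y μ)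
    (hY : ∀ i, Measurable (Y i)) (hbinY : ∀ i ω, Y i ω = 0 ∨ Y i ω = 1)
    (hmarg : ∀ i, μ.map (Y i) = μ.map (X i)) (P : Fin n → Finset (Fin m))
    (hread : ∀ i, (Finset.univ.filter fun j => i ∈ P j).card ≤ k)
    {f : Fin n → (Fin m → ℝ) → ℝ} (hmeas : ∀ j, Measurable (f j))
    (hdep : ∀ j, DependsOn (f j) (P j)) (hmono : ∀ j, MonoCube (f j))
    (hsub : ∀ j, SubmodCube (f j)) {s : ℝ} (hs : 0 ≤ s) :
    ∫ ω, exp (-(s / k) * ∑ j, f j (fun i => X i ω)) ∂μ ≤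
      ∏ j, (∫ ω, exp (-s * f j (fun i => Y i ω)) ∂μ) ^ (k : ℝ)⁻¹ := by
  have hsplit : ∀ x, exp (-(s / k) * ∑ j, f j x) = ∏ j, exp (-s * f j x) ^ (k : ℝ)⁻¹ := by
    intro x
    simp_rw [← exp_mul, ← exp_sum, Finset.mul_sum]
    congr 1
    refine Finset.sum_congr rfl fun j _ => by ring
  have hΦ : Measurable fun x => exp (-(s / k) * ∑ j, f j x) :=
    measurable_exp.comp (measurable_const.mul (Finset.measurable_sum _ fun j _ => hmeas j))
  calc ∫ ω, exp (-(s / k) * ∑ j, f j (fun i => X i ω)) ∂μ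
      ≤ ∫ ω, exp (-(s / k) * ∑ j, f j (fun i => Y i ω)) ∂μ :=
        hNA.integral_le_integral_of_supermodCube hX hbin hind hY hbinY hmarg hΦ
          (supermodCube_exp_neg_mul (MonoCube.sum _ fun j _ => hmono j)
            (SubmodCube.sum _ fun j _ => hsub j) (by positivity))
    _ = ∫ ω, ∏ j, exp (-s * f j (fun i => Y i ω)) ^ (k : ℝ)⁻¹ ∂μ := by simp_rw [hsplit]
    _ ≤ ∏ j, (∫ ω, exp (-s * f j (fun i => Y i ω)) ∂μ) ^ (k : ℝ)⁻¹ :=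
        hind.integral_prod_rpow_le (u := fun j x => exp (-s * f j x)) hY hbinY P hread
          (fun j => measurable_exp.comp (measurable_const.mul (hmeas j)))
          (fun j x => (exp_pos _).le) fun j _ _ h => by simp only [hdep j h]

end MomentGenerating

section Chernoff

lemma exp_neg_mul_le {y : ℝ} (hy : y ∈ Set.Icc (0 : ℝ) 1) (s : ℝ) :
    exp (-s * y) ≤ 1 - y + y * exp (-s) := by
  have h := convexOn_exp.2 (Set.mem_univ 0) (Set.mem_univ (-s)) (sub_nonneg.2 hy.2) hy.1
    (sub_add_cancel 1 y)
  simp only [smul_eq_mul, mul_zero, zero_add, exp_zero, mul_one] at h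
  rwa [mul_comm]

lemma integral_exp_neg_mul_le {Ω : Type*} [MeasurableSpace Ω] {μ : Measure Ω}
    [IsProbabilityMeasure μ] {Z : Ω → ℝ} (hZ : AEStronglyMeasurable Z μ)
    (h01 : ∀ ω, Z ω ∈ Set.Icc (0 : ℝ) 1) (s : ℝ) :
    ∫ ω, exp (-s * Z ω) ∂μ ≤ 1 - (1 - exp (-s)) * ∫ ω, Z ω ∂μ := by
  have hZi : Integrable Z μ := .of_bound hZ 1 (ae_of_all _ fun ω => by
    rw [Real.norm_eq_abs, abs_le]; constructor <;> linarith [(h01 ω).1, (h01 ω).2])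
  have hbound : Integrable (fun ω => 1 - Z ω + Z ω * exp (-s)) μ :=
    ((integrable_const 1).sub hZi).add (hZi.mul_const _)
  have hexp : AEStronglyMeasurable (fun ω => exp (-s * Z ω)) μ :=
    continuous_exp.comp_aestronglyMeasurable (hZ.const_mul _)
  calc ∫ ω, exp (-s * Z ω) ∂μ ≤ ∫ ω, 1 - Z ω + Z ω * exp (-s) ∂μ :=
        integral_mono (hbound.mono' hexp (ae_of_all _ fun ω => by
            rw [Real.norm_of_nonneg (exp_pos _).le]; exact exp_neg_mul_le (h01 ω) s))
          hbound fun ω => exp_neg_mul_le (h01 ω) s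
    _ = 1 - (1 - exp (-s)) * ∫ ω, Z ω ∂μ := by
        rw [integral_add (f := fun ω => 1 - Z ω) ((integrable_const 1).sub hZi)
          (hZi.mul_const _), integral_sub (integrable_const 1) hZi, integral_mul_const]
        simp only [integral_const, probReal_univ, smul_eq_mul, one_mul]
        ring

lemma prod_rpow_inv_le_mean_rpow {ι : Type*} [Fintype ι] (k : ℕ) {z : ι → ℝ}
    (hz : ∀ j, 0 ≤ z j) :
    ∏ j, z j ^ (k : ℝ)⁻¹ ≤ ((∑ j, z j) / Fintype.card ι) ^ ((Fintype.card ι : ℝ) / k) := by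
  rcases isEmpty_or_nonempty ι with hι | hι
  · simp
  have hN : (0 : ℝ) < Fintype.card ι := by exact_mod_cast Fintype.card_pos
  have hgm := Real.geom_mean_le_arith_mean_weighted Finset.univ
    (fun _ => (Fintype.card ι : ℝ)⁻¹) z (fun _ _ => by positivity)
    (by simp [Finset.card_univ, hN.ne']) fun j _ => hz j
  rw [← Finset.mul_sum, inv_mul_eq_div] at hgm
  calc ∏ j, z j ^ (k : ℝ)⁻¹
      = (∏ j, z j ^ (Fintype.card ι : ℝ)⁻¹) ^ ((Fintype.card ι : ℝ) / k) := by
        rw [← Real.finsetProd_rpow _ _ fun j _ => Real.rpow_nonneg (hz j) _]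
        refine Finset.prod_congr rfl fun j _ => ?_
        rw [← Real.rpow_mul (hz j), inv_mul_eq_div, div_div_cancel_left' hN.ne']
    _ ≤ ((∑ j, z j) / Fintype.card ι) ^ ((Fintype.card ι : ℝ) / k) :=
        Real.rpow_le_rpow (Finset.prod_nonneg fun j _ => Real.rpow_nonneg (hz j) _) hgm
          (by positivity)

end Chernoff

open Filter Topology in
lemma le_exp_neg_klBin_mul {B t p r : ℝ} (ht : 0 ≤ t) (htp : t < p) (hp : p ≤ 1) (hr : 0 ≤ r)
    (hB : ∀ s, 0 ≤ s → B ≤ exp (s * t * r) * (1 - (1 - exp (-s)) * p) ^ r) :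
    B ≤ exp (-klBin t p * r) := by
  rcases hp.eq_or_lt with rfl | hp1
  · -- `klBin t 1 = t * log t` by the junk value `log 0 = 0`
    have hB0 : B ≤ 1 := by simpa using hB 0 le_rfl
    refine hB0.trans (one_le_exp ?_)
    have := Real.mul_log_nonpos ht (htp.le)
    simp only [klBin, div_one, sub_self, div_zero, log_zero, mul_zero, add_zero]
    nlinarith
  rcases ht.eq_or_lt with rfl | ht0
  · have hlim : Tendsto (fun s => exp (s * 0 * r) * (1 - (1 - exp (-s)) * p) ^ r) atTop
        (𝓝 ((1 - p) ^ r)) := by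
      simp only [mul_zero, zero_mul, exp_zero, one_mul]
      have hcont : ContinuousAt (fun y : ℝ => (1 - (1 - y) * p) ^ r) 0 :=
        ((continuous_const.sub ((continuous_const.sub continuous_id).mul
          continuous_const)).continuousAt).rpow_const (Or.inl (by simp; linarith))
      have h := hcont.tendsto.comp tendsto_exp_neg_atTop_nhds_zero
      simpa only [Function.comp_def, sub_zero, one_mul] using h
    have hkl : exp (-klBin 0 p * r) = (1 - p) ^ r := by
      rw [rpow_def_of_pos (by linarith)]
      simp [klBin, log_inv]
    rw [hkl]
    exact ge_of_tendsto hlim ((eventually_ge_atTop 0).mono hB)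
  -- the minimiser of `s ↦ s * t + log (1 - (1 - exp (-s)) * p)`
  set s := log (p * (1 - t) / (t * (1 - p)))
  have hp0 : 0 < p := ht0.trans htp
  have h1p : 0 < 1 - p := by linarith
  have h1t : 0 < 1 - t := by linarith
  have hs : 0 ≤ s := log_nonneg <| by
    rw [le_div_iff₀ (by positivity)]
    nlinarith
  have hbase : 1 - (1 - exp (-s)) * p = (1 - p) / (1 - t) := by
    rw [exp_neg, exp_log (by positivity)]
    field_simp
    ring
  refine (hB s hs).trans_eq ?_
  rw [hbase, rpow_def_of_pos (by positivity), ← exp_add]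
  congr 1
  simp only [s, klBin]
  rw [log_div (by positivity) (by positivity), log_mul hp0.ne' h1t.ne',
    log_mul ht0.ne' h1p.ne', log_div ht0.ne' hp0.ne', log_div h1t.ne' h1p.ne',
    log_div h1p.ne' h1t.ne']
  ring

lemma OneNA.measureReal_sum_le_le_exp_mul_rpow {m n k : ℕ} {Ω : Type*} [MeasurableSpace Ω]
    {μ : Measure Ω} [IsProbabilityMeasure μ] {X : Fin m → Ω → ℝ} (hNA : OneNA μ X)
    (hX : ∀ i, Measurable (X i)) (hbin : ∀ i ω, X i ω = 0 ∨ X i ω = 1)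
    {Y : Fin m → Ω → ℝ} (hind : iIndepFun Y μ) (hY : ∀ i, Measurable (Y i))
    (hbinY : ∀ i ω, Y i ω = 0 ∨ Y i ω = 1) (hmarg : ∀ i, μ.map (Y i) = μ.map (X i))
    (P : Fin n → Finset (Fin m)) (hread : ∀ i, (Finset.univ.filter fun j => i ∈ P j).card ≤ k)
    {f : Fin n → (Fin m → ℝ) → ℝ} (hmeas : ∀ j, Measurable (f j))
    (hdep : ∀ j, DependsOn (f j) (P j))
    (hrange : ∀ j x, BinaryVec x → f j x ∈ Set.Icc (0 : ℝ) 1)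
    (hmono : ∀ j, MonoCube (f j)) (hsub : ∀ j, SubmodCube (f j)) (hn : n ≠ 0)
    (a : ℝ) {s : ℝ} (hs : 0 ≤ s) :
    μ.real {ω | ∑ j, f j (fun i => X i ω) ≤ a * n} ≤
      exp (s * a * (n / k)) *
        (1 - (1 - exp (-s)) * ((1 / n) * ∑ j, ∫ ω, f j (fun i => Y i ω) ∂μ)) ^ ((n : ℝ) / k) := by
  set q : Fin n → ℝ := fun j => ∫ ω, f j (fun i => Y i ω) ∂μ
  have hfY : ∀ j ω, f j (fun i => Y i ω) ∈ Set.Icc (0 : ℝ) 1 := fun j ω =>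
    hrange j _ fun i => hbinY i ω
  have hfactor : ∀ j, ∫ ω, exp (-s * f j (fun i => Y i ω)) ∂μ ≤ 1 - (1 - exp (-s)) * q j :=
    fun j => integral_exp_neg_mul_le
      ((hmeas j).comp (measurable_pi_lambda _ hY)).aestronglyMeasurable (hfY j) s
  have hfactor_nonneg : ∀ j, 0 ≤ 1 - (1 - exp (-s)) * q j := fun j =>
    (integral_nonneg fun ω => (exp_pos (-s * f j (fun i => Y i ω))).le).trans (hfactor j)
  have hmean : (∑ j, (1 - (1 - exp (-s)) * q j)) / n =
      1 - (1 - exp (-s)) * ((1 / n) * ∑ j, q j) := by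
    rw [Finset.sum_sub_distrib, ← Finset.mul_sum]
    field_simp
    simp [q]
  calc μ.real {ω | ∑ j, f j (fun i => X i ω) ≤ a * n}
      ≤ exp (s / k * (a * n)) * ∫ ω, exp (-(s / k) * ∑ j, f j (fun i => X i ω)) ∂μ := by
        simpa [mgf] using measure_le_le_exp_mul_mgf (X := fun ω => ∑ j, f j (fun i => X i ω))
          (a * n) (neg_nonpos.2 (by positivity)) (integrable_comp_of_binary (μ := μ)
            (Φ := fun x => exp (-(s / k) * ∑ j, f j x)) hX hbin (measurable_exp.comp
              (measurable_const.mul (Finset.measurable_sum _ fun j _ => hmeas j))))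
    _ ≤ exp (s / k * (a * n)) * ∏ j, (∫ ω, exp (-s * f j (fun i => Y i ω)) ∂μ) ^ (k : ℝ)⁻¹ :=
        mul_le_mul_of_nonneg_left (hNA.integral_exp_neg_mul_sum_le hX hbin hind hY hbinY hmarg
          P hread hmeas hdep hmono hsub hs) (exp_pos _).le
    _ ≤ exp (s / k * (a * n)) * ∏ j, (1 - (1 - exp (-s)) * q j) ^ (k : ℝ)⁻¹ := by
        gcongr with j
        exact hfactor j
    _ ≤ exp (s / k * (a * n)) * ((∑ j, (1 - (1 - exp (-s)) * q j)) / n) ^ ((n : ℝ) / k) := by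
        gcongr
        simpa using prod_rpow_inv_le_mean_rpow k hfactor_nonneg
    _ = _ := by
        rw [hmean]
        ring_nf

theorem read_k_lower_tail_submodular_general {Ω : Type*} [MeasurableSpace Ω] (μ : Measure Ω)
    [IsProbabilityMeasure μ] {m n k : ℕ} (hn : 0 < n)
    (X Xstar : Fin m → Ω → ℝ)
    (hX : ∀ i, Measurable (X i)) (hbin : ∀ i ω, X i ω = 0 ∨ X i ω = 1)
    (hNA : OneNA μ X)
    (hXstar : ∀ i, Measurable (Xstar i)) (hbinstar : ∀ i ω, Xstar i ω = 0 ∨ Xstar i ω = 1)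
    (hindep : iIndepFun Xstar μ)
    (hmarg : ∀ i, Measure.map (Xstar i) μ = Measure.map (X i) μ)
    (P : Fin n → Finset (Fin m))
    (hread : ∀ i : Fin m, (Finset.univ.filter fun j => i ∈ P j).card ≤ k)
    (f : Fin n → (Fin m → ℝ) → ℝ) (hfmeas : ∀ j, Measurable (f j))
    (hdep : ∀ j (x y : Fin m → ℝ), (∀ i ∈ P j, x i = y i) → f j x = f j y)
    (hrange : ∀ j (x : Fin m → ℝ), BinaryVec x → f j x ∈ Set.Icc (0 : ℝ) 1)
    (hmono : ∀ j, MonoCube (f j)) (hsub : ∀ j, SubmodCube (f j))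
    (p0 : ℝ) (hp0 : p0 = (1 / n : ℝ) * ∑ j, ∫ ω, f j (fun i => Xstar i ω) ∂μ)
    (ε : ℝ) (hε : 0 < ε) (hεle : 0 ≤ p0 - ε) :
    (μ {ω | ∑ j, f j (fun i => X i ω) ≤ (p0 - ε) * n}).toReal ≤
      Real.exp (-(klBin (p0 - ε) p0) * n / k) := by
  have hmean : ∀ j, ∫ ω, f j (fun i => Xstar i ω) ∂μ ∈ Set.Icc (0 : ℝ) 1 := fun j =>
    integral_mem_Icc_zero_one fun ω => hrange j _ fun i => hbinstar i ω
  have hp0_le : p0 ≤ 1 := by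
    rw [hp0, one_div, inv_mul_le_iff₀ (by positivity), mul_one]
    simpa using Finset.sum_le_sum fun j (_ : j ∈ Finset.univ) => (hmean j).2
  rw [mul_div_assoc]
  refine le_exp_neg_klBin_mul hεle (by linarith) hp0_le (by positivity) fun s hs => ?_
  have h := hNA.measureReal_sum_le_le_exp_mul_rpow hX hbin hindep hXstar hbinstar hmarg P hread hfmeas
    (fun j _ _ h => hdep j _ _ h) hrange hmono hsub hn.ne' (p0 - ε) hs
  rwa [← hp0] at h

/-- Lower-tail read-k bound for monotone submodular functions of binary
1-negatively associated random variables. -/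
theorem read_k_lower_tail_submodular {Ω : Type*} [MeasurableSpace Ω] (μ : Measure Ω)
    [IsProbabilityMeasure μ] {m n k : ℕ} (hn : 0 < n) (hk : 0 < k)
    (X Xstar : Fin m → Ω → ℝ)
    (hX : ∀ i, Measurable (X i)) (hbin : ∀ i ω, X i ω = 0 ∨ X i ω = 1)
    (hNA : OneNA μ X)
    (hXstar : ∀ i, Measurable (Xstar i)) (hbinstar : ∀ i ω, Xstar i ω = 0 ∨ Xstar i ω = 1)
    (hindep : iIndepFun Xstar μ)
    (hmarg : ∀ i, Measure.map (Xstar i) μ = Measure.map (X i) μ)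
    (P : Fin n → Finset (Fin m))
    (hread : ∀ i : Fin m, (Finset.univ.filter fun j => i ∈ P j).card ≤ k)
    (f : Fin n → (Fin m → ℝ) → ℝ) (hfmeas : ∀ j, Measurable (f j))
    (hdep : ∀ j (x y : Fin m → ℝ), (∀ i ∈ P j, x i = y i) → f j x = f j y)
    (hrange : ∀ j (x : Fin m → ℝ), BinaryVec x → f j x ∈ Set.Icc (0 : ℝ) 1)
    (hmono : ∀ j, MonoCube (f j)) (hsub : ∀ j, SubmodCube (f j))
    (p0 : ℝ) (hp0 : p0 = (1 / n : ℝ) * ∑ j, ∫ ω, f j (fun i => Xstar i ω) ∂μ)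
    (ε : ℝ) (hε : 0 < ε) (hεle : 0 ≤ p0 - ε) :
    (μ {ω | ∑ j, f j (fun i => X i ω) ≤ (p0 - ε) * n}).toReal ≤
      Real.exp (-(klBin (p0 - ε) p0) * n / k) :=
  read_k_lower_tail_submodular_general μ hn X Xstar hX hbin hNA hXstar hbinstar hindep hmarg P hread
    f hfmeas hdep hrange hmono hsub p0 hp0 ε hε hεle
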